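/- For every complex number q with |q| < 1 (with values of q making any denominator factor 1 + q^j vanish excluded), ∑_{m≥1, n≥0} q^{2m+n} (q^3; q^3)_{m−1} (q; q)_{m+n} (−q^3; q^3)_{m+n−1} / [ (q; q)_{m−1} (−q; q)_m^2 (−q; q)_{m+n−1} (q^3; q^3)_{m+n} ] = (1/3)·(−q^3; q^3)_∞ / (−q; q)_∞^3 − (1/2)·(−q^3; q^3)_∞ (q; q)_∞ / [ (q^3; q^3)_∞ (−q; q)_∞ ] + 1/6. -/

import Mathlib

/-- Finite q-Pochhammer symbol `(a; q)_n = ∏_{j=0}^{n-1} (1 - a q^j)`. -/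
noncomputable def qPoch (q a : ℂ) (n : ℕ) : ℂ := ∏ j ∈ Finset.range n, (1 - a * q ^ j)

/-- Infinite q-Pochhammer symbol `(a; q)_∞ = ∏_{j=0}^{∞} (1 - a q^j)`. -/
noncomputable def qPochInf (q a : ℂ) : ℂ := ∏' j : ℕ, (1 - a * q ^ j)

/-!
With `x = q^(k+1)`, the `k`-th factors of `(q;q)`, `(-q;q)`, `(q³;q³)`, `(-q³;q³)` are
`1 - x`, `1 + x`, `1 - x³`, `1 + x³`. Hence the ratios
`e_k = ⅓ (-q³;q³)_k / (-q;q)_k³` (`firstQuot`),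
`c_k = ½ (-q³;q³)_k (q;q)_k / ((q³;q³)_k (-q;q)_k)` (`secondQuot`) and
`d_k = (q³;q³)_k / ((q;q)_k (-q;q)_k²)` (`outerQuot`) have increments of size `O(|q|^k)`,
and the summand at `(m, n) = (i + 1, n)` is `(d_i - d_{i+1}) (c_{i+n} - c_{i+n+1})`.
Summing over `n` telescopes to `(d_i - d_{i+1}) (c_i - c_∞)`. Since `d_k c_k = (3/2) e_k`,
one has `(d_i - d_{i+1}) c_i = (e_i - e_{i+1}) / 2`, so the sum over `i` telescopes too,
to `½ (e_0 - e_∞) - c_∞ (d_0 - d_∞) = e_∞ - c_∞ + 1/6`.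
-/

open Filter Topology

section Telescoping

theorem hasSum_sub_succ_of_norm_le_geometric {E : Type*} [NormedAddCommGroup E] [CompleteSpace E]
    {g : ℕ → E} {L : E} {C r : ℝ} (hr₀ : 0 ≤ r) (hr : r < 1) (hg : Tendsto g atTop (𝓝 L))
    (hb : ∀ n, ‖g n - g (n + 1)‖ ≤ C * r ^ n) :
    HasSum (fun n ↦ g n - g (n + 1)) (g 0 - L) := by
  have hs : Summable fun n ↦ ‖g n - g (n + 1)‖ :=
    .of_nonneg_of_le (fun _ ↦ norm_nonneg _) hb ((summable_geometric_of_lt_one hr₀ hr).mul_left C)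
  rw [hasSum_iff_tendsto_nat_of_summable_norm hs]
  simpa only [Finset.sum_range_sub'] using tendsto_const_nhds.sub hg

theorem hasSum_mul_sub_succ_add {R : Type*} [NormedRing R] [CompleteSpace R]
    {a c : ℕ → R} {L : R} {A C r : ℝ} (hr₀ : 0 ≤ r) (hr : r < 1) (hc : Tendsto c atTop (𝓝 L))
    (ha : ∀ i, ‖a i‖ ≤ A * r ^ i) (hb : ∀ k, ‖c k - c (k + 1)‖ ≤ C * r ^ k) :
    HasSum (fun p : ℕ × ℕ ↦ a p.1 * (c (p.1 + p.2) - c (p.1 + p.2 + 1)))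
      (∑' i, a i * (c i - L)) := by
  have hinner : ∀ i, HasSum (fun n ↦ a i * (c (i + n) - c (i + n + 1))) (a i * (c i - L)) := by
    intro i
    refine (hasSum_sub_succ_of_norm_le_geometric (g := fun n ↦ c (i + n)) (C := C * r ^ i)
      hr₀ hr ?_ fun n ↦ ?_).mul_left (a i)
    · simpa only [add_comm i] using (tendsto_add_atTop_iff_nat i).2 hc
    · simpa only [pow_add, mul_assoc, add_assoc] using hb (i + n)
  have hC : 0 ≤ C := (norm_nonneg _).trans (by simpa using hb 0)
  have hsum : Summable fun p : ℕ × ℕ ↦ a p.1 * (c (p.1 + p.2) - c (p.1 + p.2 + 1)) := by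
    refine .of_norm_bounded ((summable_geometric_of_lt_one hr₀ hr).mul_of_nonneg
      (summable_geometric_of_lt_one hr₀ hr) (fun i ↦ ?_) (fun n ↦ ?_) |>.mul_left (A * C))
      fun ⟨i, n⟩ ↦ ?_
    · exact pow_nonneg hr₀ i
    · exact pow_nonneg hr₀ n
    calc ‖a i * (c (i + n) - c (i + n + 1))‖
        ≤ (A * r ^ i) * (C * r ^ (i + n)) :=
          (norm_mul_le _ _).trans (mul_le_mul (ha i) (hb _) (norm_nonneg _)
            ((norm_nonneg _).trans (ha i)))
      _ ≤ (A * r ^ i) * (C * r ^ n) :=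
          mul_le_mul_of_nonneg_left (mul_le_mul_of_nonneg_left
            (pow_le_pow_of_le_one hr₀ hr.le (Nat.le_add_left n i)) hC)
            ((norm_nonneg _).trans (ha i))
      _ = A * C * (r ^ i * r ^ n) := by ring
  rw [← (hsum.tsum_prod' fun i ↦ (hinner i).summable).trans (tsum_congr fun i ↦ (hinner i).tsum_eq)]
  exact hsum.hasSum

end Telescoping

theorem exists_norm_pow_succ_mul_le {w : ℕ → ℂ} {W : ℂ} (hw : Tendsto w atTop (𝓝 W)) (q : ℂ) :
    ∃ C, ∀ n, ‖q ^ (n + 1) * w n‖ ≤ C * ‖q‖ ^ n := by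
  obtain ⟨B, hB⟩ := hw.norm.bddAbove_range
  refine ⟨‖q‖ * B, fun n ↦ ?_⟩
  calc ‖q ^ (n + 1) * w n‖ = ‖q‖ * ‖q‖ ^ n * ‖w n‖ := by rw [norm_mul, norm_pow, pow_succ']
    _ ≤ ‖q‖ * ‖q‖ ^ n * B := by gcongr; exact hB ⟨n, rfl⟩
    _ = ‖q‖ * B * ‖q‖ ^ n := by ring

theorem tendsto_pow_succ {q : ℂ} (hq : ‖q‖ < 1) : Tendsto (fun k ↦ q ^ (k + 1)) atTop (𝓝 0) :=
  (tendsto_add_atTop_iff_nat 1).2 (tendsto_pow_atTop_nhds_zero_of_norm_lt_one hq)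

section QPochhammer

variable {q : ℂ}

theorem one_sub_ne_zero_of_norm_lt_one {x : ℂ} (hx : ‖x‖ < 1) : 1 - x ≠ 0 := by
  rw [sub_ne_zero]
  rintro rfl
  simp at hx

theorem one_add_ne_zero_of_norm_lt_one {x : ℂ} (hx : ‖x‖ < 1) : 1 + x ≠ 0 := by
  simpa using one_sub_ne_zero_of_norm_lt_one (x := -x) (by simpa using hx)

theorem one_sub_pow_three (x : ℂ) : 1 - x ^ 3 = (1 - x) * (1 + x + x ^ 2) := by
  ring

theorem one_add_add_sq_ne_zero_of_norm_lt_one {x : ℂ} (hx : ‖x‖ < 1) : 1 + x + x ^ 2 ≠ 0 := by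
  refine right_ne_zero_of_mul (one_sub_pow_three x ▸ one_sub_ne_zero_of_norm_lt_one ?_)
  simpa using pow_lt_one₀ (norm_nonneg x) hx three_ne_zero

theorem mul_pow_ne_one {a : ℂ} (ha : ‖a‖ < 1) (hq : ‖q‖ ≤ 1) (j : ℕ) : a * q ^ j ≠ 1 := by
  refine fun h ↦ (one_sub_ne_zero_of_norm_lt_one ?_) (sub_eq_zero.2 h.symm)
  rw [norm_mul, norm_pow]
  exact mul_lt_one_of_nonneg_of_lt_one_left (norm_nonneg a) ha (pow_le_one₀ (norm_nonneg q) hq)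

theorem qPoch_succ (q a : ℂ) (k : ℕ) : qPoch q a (k + 1) = qPoch q a k * (1 - a * q ^ k) :=
  Finset.prod_range_succ _ _

theorem qPoch_ne_zero {a : ℂ} (ha : ∀ j, a * q ^ j ≠ 1) (k : ℕ) : qPoch q a k ≠ 0 :=
  Finset.prod_ne_zero_iff.2 fun j _ ↦ sub_ne_zero.2 (ha j).symm

theorem qPoch_ne_zero_of_norm_lt_one {a : ℂ} (ha : ‖a‖ < 1) (hq : ‖q‖ ≤ 1) (k : ℕ) :
    qPoch q a k ≠ 0 :=
  qPoch_ne_zero (mul_pow_ne_one ha hq) k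

theorem summable_norm_neg_mul_pow (hq : ‖q‖ < 1) (a : ℂ) :
    Summable fun j : ℕ ↦ ‖-(a * q ^ j)‖ := by
  simpa [norm_mul, norm_pow] using
    (summable_geometric_of_lt_one (norm_nonneg q) hq).mul_left ‖a‖

theorem tendsto_qPoch (hq : ‖q‖ < 1) (a : ℂ) :
    Tendsto (qPoch q a) atTop (𝓝 (qPochInf q a)) := by
  have h := (multipliable_one_add_of_summable (summable_norm_neg_mul_pow hq a)).hasProd
  simp only [← sub_eq_add_neg] at h
  exact h.tendsto_prod_nat

theorem qPochInf_ne_zero (hq : ‖q‖ < 1) {a : ℂ} (ha : ∀ j, a * q ^ j ≠ 1) : qPochInf q a ≠ 0 := by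
  have h := tprod_one_add_ne_zero_of_summable
    (fun j ↦ by simpa [← sub_eq_add_neg] using sub_ne_zero.2 (ha j).symm)
    (summable_norm_neg_mul_pow hq a)
  simpa only [qPochInf, ← sub_eq_add_neg] using h

theorem qPochInf_ne_zero_of_norm_lt_one {a : ℂ} (ha : ‖a‖ < 1) (hq : ‖q‖ < 1) :
    qPochInf q a ≠ 0 :=
  qPochInf_ne_zero hq (mul_pow_ne_one ha hq.le)

theorem qPoch_self_succ (q : ℂ) (k : ℕ) : qPoch q q (k + 1) = qPoch q q k * (1 - q ^ (k + 1)) := by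
  rw [qPoch_succ]; ring

theorem qPoch_neg_self_succ (q : ℂ) (k : ℕ) :
    qPoch q (-q) (k + 1) = qPoch q (-q) k * (1 + q ^ (k + 1)) := by
  rw [qPoch_succ]; ring

theorem qPoch_cube_succ (q : ℂ) (k : ℕ) :
    qPoch (q ^ 3) (q ^ 3) (k + 1) = qPoch (q ^ 3) (q ^ 3) k * (1 - (q ^ (k + 1)) ^ 3) := by
  rw [qPoch_succ]; ring

theorem qPoch_neg_cube_succ (q : ℂ) (k : ℕ) :
    qPoch (q ^ 3) (-q ^ 3) (k + 1) = qPoch (q ^ 3) (-q ^ 3) k * (1 + (q ^ (k + 1)) ^ 3) := by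
  rw [qPoch_succ]; ring

end QPochhammer

noncomputable def firstQuot (q : ℂ) (k : ℕ) : ℂ :=
  1 / 3 * qPoch (q ^ 3) (-q ^ 3) k / qPoch q (-q) k ^ 3

noncomputable def secondQuot (q : ℂ) (k : ℕ) : ℂ :=
  1 / 2 * (qPoch (q ^ 3) (-q ^ 3) k * qPoch q q k) / (qPoch (q ^ 3) (q ^ 3) k * qPoch q (-q) k)

noncomputable def outerQuot (q : ℂ) (k : ℕ) : ℂ :=
  qPoch (q ^ 3) (q ^ 3) k / (qPoch q q k * qPoch q (-q) k ^ 2)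

section Quotients

variable {q : ℂ} (hq : ‖q‖ < 1)
include hq

theorem norm_cube_lt_one : ‖q ^ 3‖ < 1 := by
  simpa using pow_lt_one₀ (norm_nonneg q) hq three_ne_zero

theorem norm_pow_succ_lt_one (k : ℕ) : ‖q ^ (k + 1)‖ < 1 := by
  simpa using pow_lt_one₀ (norm_nonneg q) hq k.succ_ne_zero

theorem firstQuot_sub_succ (k : ℕ) :
    firstQuot q k - firstQuot q (k + 1) =
      q ^ (k + 1) * (3 * firstQuot q k / (1 + q ^ (k + 1)) ^ 2) := by
  have h₁ := qPoch_ne_zero_of_norm_lt_one (a := -q) (by simpa using hq) hq.le k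
  have h₂ := one_add_ne_zero_of_norm_lt_one (norm_pow_succ_lt_one hq k)
  rw [firstQuot, firstQuot, qPoch_neg_cube_succ, qPoch_neg_self_succ]
  field_simp
  ring

theorem secondQuot_sub_succ (k : ℕ) :
    secondQuot q k - secondQuot q (k + 1) =
      q ^ (k + 1) * (2 * secondQuot q k / (1 + q ^ (k + 1) + (q ^ (k + 1)) ^ 2)) := by
  have h₁ := qPoch_ne_zero_of_norm_lt_one (a := -q) (by simpa using hq) hq.le k
  have h₂ := qPoch_ne_zero_of_norm_lt_one (norm_cube_lt_one hq) (norm_cube_lt_one hq).le k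
  have h₃ := one_add_ne_zero_of_norm_lt_one (norm_pow_succ_lt_one hq k)
  have h₄ := one_sub_ne_zero_of_norm_lt_one (norm_pow_succ_lt_one hq k)
  have h₅ := one_add_add_sq_ne_zero_of_norm_lt_one (norm_pow_succ_lt_one hq k)
  rw [secondQuot, secondQuot, qPoch_neg_cube_succ, qPoch_self_succ, qPoch_cube_succ,
    qPoch_neg_self_succ, one_sub_pow_three]
  field_simp
  ring

theorem outerQuot_sub_succ (k : ℕ) :
    outerQuot q k - outerQuot q (k + 1) =
      q ^ (k + 1) * (outerQuot q k / (1 + q ^ (k + 1)) ^ 2) := by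
  have h₁ := qPoch_ne_zero_of_norm_lt_one (a := -q) (by simpa using hq) hq.le k
  have h₂ := qPoch_ne_zero_of_norm_lt_one hq hq.le k
  have h₃ := one_add_ne_zero_of_norm_lt_one (norm_pow_succ_lt_one hq k)
  have h₄ := one_sub_ne_zero_of_norm_lt_one (norm_pow_succ_lt_one hq k)
  rw [outerQuot, outerQuot, qPoch_cube_succ, qPoch_self_succ q, qPoch_neg_self_succ q,
    one_sub_pow_three]
  field_simp
  ring

theorem outerQuot_mul_secondQuot (k : ℕ) :
    outerQuot q k * secondQuot q k = 3 / 2 * firstQuot q k := by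
  have h₁ := qPoch_ne_zero_of_norm_lt_one (a := -q) (by simpa using hq) hq.le k
  have h₂ := qPoch_ne_zero_of_norm_lt_one (norm_cube_lt_one hq) (norm_cube_lt_one hq).le k
  have h₃ := qPoch_ne_zero_of_norm_lt_one hq hq.le k
  rw [outerQuot, secondQuot, firstQuot]
  field_simp

theorem tendsto_firstQuot :
    Tendsto (firstQuot q) atTop
      (𝓝 (1 / 3 * qPochInf (q ^ 3) (-q ^ 3) / qPochInf q (-q) ^ 3)) :=
  ((tendsto_qPoch (norm_cube_lt_one hq) _).const_mul _).div ((tendsto_qPoch hq _).pow 3)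
    (pow_ne_zero _ (qPochInf_ne_zero_of_norm_lt_one (by simpa using hq) hq))

theorem tendsto_secondQuot :
    Tendsto (secondQuot q) atTop (𝓝 (1 / 2 * (qPochInf (q ^ 3) (-q ^ 3) * qPochInf q q) /
      (qPochInf (q ^ 3) (q ^ 3) * qPochInf q (-q)))) :=
  (((tendsto_qPoch (norm_cube_lt_one hq) _).mul (tendsto_qPoch hq _)).const_mul _).div
    ((tendsto_qPoch (norm_cube_lt_one hq) _).mul (tendsto_qPoch hq _))
    (mul_ne_zero (qPochInf_ne_zero_of_norm_lt_one (norm_cube_lt_one hq) (norm_cube_lt_one hq))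
      (qPochInf_ne_zero_of_norm_lt_one (by simpa using hq) hq))

theorem tendsto_outerQuot :
    Tendsto (outerQuot q) atTop
      (𝓝 (qPochInf (q ^ 3) (q ^ 3) / (qPochInf q q * qPochInf q (-q) ^ 2))) :=
  (tendsto_qPoch (norm_cube_lt_one hq) _).div
    ((tendsto_qPoch hq _).mul ((tendsto_qPoch hq _).pow 2))
    (mul_ne_zero (qPochInf_ne_zero_of_norm_lt_one hq hq)
      (pow_ne_zero _ (qPochInf_ne_zero_of_norm_lt_one (by simpa using hq) hq)))

theorem exists_norm_firstQuot_sub_succ_le :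
    ∃ C, ∀ n, ‖firstQuot q n - firstQuot q (n + 1)‖ ≤ C * ‖q‖ ^ n := by
  obtain ⟨C, hC⟩ := exists_norm_pow_succ_mul_le (((tendsto_firstQuot hq).const_mul 3).div
    (((tendsto_pow_succ hq).const_add 1).pow 2) (by simp)) q
  exact ⟨C, fun n ↦ firstQuot_sub_succ hq n ▸ hC n⟩

theorem exists_norm_secondQuot_sub_succ_le :
    ∃ C, ∀ n, ‖secondQuot q n - secondQuot q (n + 1)‖ ≤ C * ‖q‖ ^ n := by
  obtain ⟨C, hC⟩ := exists_norm_pow_succ_mul_le (((tendsto_secondQuot hq).const_mul 2).div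
    (((tendsto_pow_succ hq).const_add 1).add ((tendsto_pow_succ hq).pow 2)) (by simp)) q
  exact ⟨C, fun n ↦ secondQuot_sub_succ hq n ▸ hC n⟩

theorem exists_norm_outerQuot_sub_succ_le :
    ∃ C, ∀ n, ‖outerQuot q n - outerQuot q (n + 1)‖ ≤ C * ‖q‖ ^ n := by
  obtain ⟨C, hC⟩ := exists_norm_pow_succ_mul_le ((tendsto_outerQuot hq).div
    (((tendsto_pow_succ hq).const_add 1).pow 2) (by simp)) q
  exact ⟨C, fun n ↦ outerQuot_sub_succ hq n ▸ hC n⟩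

theorem hasSum_outerQuot_sub_succ_mul :
    HasSum (fun i ↦ (outerQuot q i - outerQuot q (i + 1)) * (secondQuot q i -
        1 / 2 * (qPochInf (q ^ 3) (-q ^ 3) * qPochInf q q) /
          (qPochInf (q ^ 3) (q ^ 3) * qPochInf q (-q))))
      (1 / 3 * qPochInf (q ^ 3) (-q ^ 3) / qPochInf q (-q) ^ 3
        - 1 / 2 * (qPochInf (q ^ 3) (-q ^ 3) * qPochInf q q) /
          (qPochInf (q ^ 3) (q ^ 3) * qPochInf q (-q)) + 1 / 6) := by
  set Le := 1 / 3 * qPochInf (q ^ 3) (-q ^ 3) / qPochInf q (-q) ^ 3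
  set Lc := 1 / 2 * (qPochInf (q ^ 3) (-q ^ 3) * qPochInf q q) /
    (qPochInf (q ^ 3) (q ^ 3) * qPochInf q (-q))
  set Ld := qPochInf (q ^ 3) (q ^ 3) / (qPochInf q q * qPochInf q (-q) ^ 2)
  obtain ⟨Ce, hCe⟩ := exists_norm_firstQuot_sub_succ_le hq
  obtain ⟨Cd, hCd⟩ := exists_norm_outerQuot_sub_succ_le hq
  have he := hasSum_sub_succ_of_norm_le_geometric (norm_nonneg q) hq (tendsto_firstQuot hq) hCe
  have hd := hasSum_sub_succ_of_norm_le_geometric (norm_nonneg q) hq (tendsto_outerQuot hq) hCd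
  have hlim : Ld * Lc = 3 / 2 * Le := tendsto_nhds_unique
    ((tendsto_outerQuot hq).mul (tendsto_secondQuot hq))
    (by simpa only [outerQuot_mul_secondQuot hq] using (tendsto_firstQuot hq).const_mul (3 / 2))
  have hstep : ∀ i, (outerQuot q i - outerQuot q (i + 1)) * (secondQuot q i - Lc) =
      1 / 2 * (firstQuot q i - firstQuot q (i + 1)) - Lc * (outerQuot q i - outerQuot q (i + 1)) :=
    fun i ↦ by
      rw [outerQuot_sub_succ hq, firstQuot_sub_succ hq]
      linear_combination q ^ (i + 1) / (1 + q ^ (i + 1)) ^ 2 * outerQuot_mul_secondQuot hq i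
  have he₀ : firstQuot q 0 = 1 / 3 := by simp [firstQuot, qPoch]
  have hd₀ : outerQuot q 0 = 1 := by simp [outerQuot, qPoch]
  have h0 : Le - Lc + 1 / 6 = 1 / 2 * (firstQuot q 0 - Le) - Lc * (outerQuot q 0 - Ld) := by
    rw [he₀, hd₀]
    linear_combination -hlim
  rw [funext hstep, h0]
  exact (he.mul_left _).sub (hd.mul_left _)

theorem term_eq_mul_sub_succ (i n : ℕ) :
    q ^ (2 * (i + 1) + n) * qPoch (q ^ 3) (q ^ 3) i * qPoch q q (i + 1 + n) *
        qPoch (q ^ 3) (-q ^ 3) (i + n) /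
      (qPoch q q i * qPoch q (-q) (i + 1) ^ 2 * qPoch q (-q) (i + n) *
        qPoch (q ^ 3) (q ^ 3) (i + 1 + n)) =
      (outerQuot q i - outerQuot q (i + 1)) *
        (secondQuot q (i + n) - secondQuot q (i + n + 1)) := by
  have h₁ := qPoch_ne_zero_of_norm_lt_one (a := -q) (by simpa using hq) hq.le i
  have h₂ := qPoch_ne_zero_of_norm_lt_one (a := -q) (by simpa using hq) hq.le (i + n)
  have h₃ := qPoch_ne_zero_of_norm_lt_one hq hq.le i
  have h₄ := qPoch_ne_zero_of_norm_lt_one hq hq.le (i + n)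
  have h₅ := qPoch_ne_zero_of_norm_lt_one (norm_cube_lt_one hq) (norm_cube_lt_one hq).le (i + n)
  have h₆ := one_add_ne_zero_of_norm_lt_one (norm_pow_succ_lt_one hq i)
  have h₇ := one_sub_ne_zero_of_norm_lt_one (norm_pow_succ_lt_one hq (i + n))
  have h₈ := one_add_add_sq_ne_zero_of_norm_lt_one (norm_pow_succ_lt_one hq (i + n))
  rw [outerQuot_sub_succ hq, secondQuot_sub_succ hq, add_right_comm i 1 n,
    qPoch_self_succ q (i + n), qPoch_cube_succ q (i + n), qPoch_neg_self_succ q i,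
    one_sub_pow_three, outerQuot, secondQuot]
  field_simp
  ring

end Quotients

/- The double sum is over `m ≥ 1, n ≥ 0`, encoded by `m = p.1 + 1`, `n = p.2`. -/
theorem thmDS1_c (q : ℂ) (hq : ‖q‖ < 1) :
    ∑' p : ℕ × ℕ,
      q ^ (2 * (p.1 + 1) + p.2) * qPoch (q ^ 3) (q ^ 3) p.1 *
        qPoch q q (p.1 + 1 + p.2) * qPoch (q ^ 3) (-q ^ 3) (p.1 + p.2) /
      (qPoch q q p.1 * (qPoch q (-q) (p.1 + 1)) ^ 2 * qPoch q (-q) (p.1 + p.2) *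
        qPoch (q ^ 3) (q ^ 3) (p.1 + 1 + p.2))
    = (1 / 3) * qPochInf (q ^ 3) (-q ^ 3) / (qPochInf q (-q)) ^ 3
      - (1 / 2) * (qPochInf (q ^ 3) (-q ^ 3) * qPochInf q q) /
          (qPochInf (q ^ 3) (q ^ 3) * qPochInf q (-q))
      + 1 / 6 := by
  obtain ⟨Cd, hCd⟩ := exists_norm_outerQuot_sub_succ_le hq
  obtain ⟨Cc, hCc⟩ := exists_norm_secondQuot_sub_succ_le hq
  simp only [term_eq_mul_sub_succ hq]
  rw [(hasSum_mul_sub_succ_add (norm_nonneg q) hq (tendsto_secondQuot hq) hCd hCc).tsum_eq]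
  exact (hasSum_outerQuot_sub_succ_mul hq).tsum_eq
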